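/- Let $Z$ have absolutely continuous cdf $H$ and let $\delta\in\{0,1\}$, with subdistribution functions $H^{(j)}(v)=\mathbb{P}(Z\leq v,\delta=j)$, $j=0,1$, and $\theta:=\mathbb{P}(\delta=1)=H^{(1)}(\infty)\in(0,1)$. Then the random variable $U:=\delta H^{(1)}(Z)+(1-\delta)(\theta+H^{(0)}(Z))$ is uniformly distributed on $(0,1)$. -/
import Mathlib

open MeasureTheory

/-- Generalized probability integral transform for subdistribution functions. -/
lemma key_lemma {Ω : Type*} [MeasurableSpace Ω] (P : Measure Ω) [IsProbabilityMeasure P]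
    (Z : Ω → ℝ) (hZ : Measurable Z) (D : Set Ω) (hD : MeasurableSet D)
    (G : ℝ → ℝ) (hG : ∀ v, G v = (P ({ω | Z ω ≤ v} ∩ D)).toReal)
    (hGc : Continuous G) (t : ℝ) (ht : 0 ≤ t) :
    (P ({ω | G (Z ω) ≤ t} ∩ D)).toReal = min t (P D).toReal := by
  set τ := (P D).toReal with hτdef
  have hmono : Monotone G := by
    intro v w hvw
    rw [hG, hG]
    exact ENNReal.toReal_mono (measure_ne_top _ _)
      (measure_mono (Set.inter_subset_inter_left _ (fun ω h => le_trans h hvw)))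
  have hle : ∀ v, G v ≤ τ := fun v => by
    rw [hG]
    exact ENNReal.toReal_mono (measure_ne_top _ _) (measure_mono Set.inter_subset_right)
  have hnn : ∀ v, 0 ≤ G v := fun v => by rw [hG]; exact ENNReal.toReal_nonneg
  by_cases hτt : τ ≤ t
  · have hset : {ω | G (Z ω) ≤ t} ∩ D = D := by
      apply Set.inter_eq_right.mpr
      intro ω _
      exact le_trans (hle _) hτt
    rw [hset, min_eq_right hτt]
  · push_neg at hτt
    have htop : ∃ v₀ : ℝ, t < G v₀ := by
      by_contra h
      push_neg at h
      have hun : ⋃ n : ℕ, ({ω | Z ω ≤ (n:ℝ)} ∩ D) = D := by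
        ext ω
        simp only [Set.mem_iUnion, Set.mem_inter_iff, Set.mem_setOf_eq]
        constructor
        · rintro ⟨n, _, hDω⟩; exact hDω
        · intro hDω
          obtain ⟨n, hn⟩ := exists_nat_ge (Z ω)
          exact ⟨n, hn, hDω⟩
      have hmonoS : Monotone (fun n : ℕ => {ω | Z ω ≤ (n:ℝ)} ∩ D) := by
        intro n m hnm
        refine Set.inter_subset_inter_left _ (fun ω hω => ?_)
        simp only [Set.mem_setOf_eq] at hω ⊢
        exact le_trans hω (Nat.cast_le.mpr hnm)
      have htend := tendsto_measure_iUnion_atTop (μ := P) hmonoS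
      rw [hun] at htend
      have htendR : Filter.Tendsto (fun n : ℕ => G (n:ℝ)) Filter.atTop (nhds τ) := by
        have h2 := (ENNReal.tendsto_toReal (measure_ne_top P D)).comp htend
        convert h2 using 2 with n
        rw [hG]
        rfl
      have hfin : τ ≤ t := le_of_tendsto htendR (Filter.Eventually.of_forall (fun n => h _))
      exact absurd hfin (not_le.mpr hτt)
    obtain ⟨v₀, hv₀⟩ := htop
    set S := {v : ℝ | G v ≤ t} with hSdef
    by_cases hS : S.Nonempty
    · have hSbdd : BddAbove S := by
        refine ⟨v₀, fun v hv => ?_⟩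
        by_contra hlt
        push_neg at hlt
        exact absurd (le_trans (hmono hlt.le) hv) (not_le.mpr hv₀)
      have hSclosed : IsClosed S := isClosed_le hGc continuous_const
      set a := sSup S with hadef
      have haS : a ∈ S := hSclosed.csSup_mem hS hSbdd
      have hGa : G a = t := by
        refine le_antisymm haS ?_
        by_contra hlt
        push_neg at hlt
        have hmemnb : {x : ℝ | G x < t} ∈ nhds a := (isOpen_lt hGc continuous_const).mem_nhds hlt
        obtain ⟨ε, hε, hball⟩ := Metric.mem_nhds_iff.1 hmemnb
        have hmem : a + ε/2 ∈ S := by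
          have hball2 : a + ε/2 ∈ Metric.ball a ε := by
            simp only [Metric.mem_ball, Real.dist_eq]
            rw [abs_of_nonneg (by linarith : (0:ℝ) ≤ a + ε/2 - a)]
            linarith
          have hlt2 : G (a + ε/2) < t := hball hball2
          exact le_of_lt hlt2
        have hcs := le_csSup hSbdd hmem
        linarith
      have hSeq : S = Set.Iic a := by
        ext v
        constructor
        · intro hv; exact le_csSup hSbdd hv
        · intro hv; exact le_trans (hmono hv) (le_of_eq hGa)
      have hset : {ω : Ω | G (Z ω) ≤ t} = {ω | Z ω ≤ a} := by
        ext ω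
        have hiff : Z ω ∈ S ↔ Z ω ∈ Set.Iic a := by rw [hSeq]
        simpa [hSdef] using hiff
      rw [hset, ← hG, hGa, min_eq_left hτt.le]
    · have ht0 : t = 0 := by
        by_contra h
        have htpos : 0 < t := lt_of_le_of_ne ht (Ne.symm h)
        have hint : ⋂ n : ℕ, ({ω | Z ω ≤ -(n:ℝ)} ∩ D) = ∅ := by
          ext ω
          simp only [Set.mem_iInter, Set.mem_inter_iff, Set.mem_setOf_eq, Set.mem_empty_iff_false,
            iff_false, not_forall]
          obtain ⟨n, hn⟩ := exists_nat_gt (-(Z ω))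
          exact ⟨n, fun hc => absurd hc.1 (by push_neg; linarith)⟩
        have hanti : Antitone (fun n : ℕ => {ω | Z ω ≤ -(n:ℝ)} ∩ D) := by
          intro n m hnm
          refine Set.inter_subset_inter_left _ (fun ω hω => ?_)
          simp only [Set.mem_setOf_eq] at hω ⊢
          exact le_trans hω (neg_le_neg (Nat.cast_le.mpr hnm))
        have hmeas : ∀ n : ℕ, NullMeasurableSet ({ω | Z ω ≤ -(n:ℝ)} ∩ D) P :=
          fun n => ((hZ measurableSet_Iic).inter hD).nullMeasurableSet
        have htend := tendsto_measure_iInter_atTop (μ := P) hmeas hanti ⟨0, measure_ne_top _ _⟩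
        rw [hint] at htend
        simp only [measure_empty] at htend
        have htendR : Filter.Tendsto (fun n : ℕ => G (-(n:ℝ))) Filter.atTop (nhds 0) := by
          have h2 := (ENNReal.tendsto_toReal (by simp : (0:ENNReal) ≠ ⊤)).comp htend
          simp only [ENNReal.toReal_zero] at h2
          convert h2 using 2 with n
          rw [hG]
          rfl
        obtain ⟨n, hn⟩ := (htendR.eventually_lt_const htpos).exists
        exact hS ⟨-(n:ℝ), le_of_lt (by simpa using hn)⟩
      have hset : {ω : Ω | G (Z ω) ≤ t} ∩ D = ∅ := by
        ext ω
        simp only [Set.mem_inter_iff, Set.mem_setOf_eq, Set.mem_empty_iff_false, iff_false,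
          not_and]
        intro hGω _
        exact hS ⟨Z ω, hGω⟩
      rw [hset, ht0]
      simp [ENNReal.toReal_nonneg, le_trans (hnn 0) (hle 0)]

/-- The random variable `U = δ H⁽¹⁾(Z) + (1-δ)(θ + H⁽⁰⁾(Z))` is uniform on `(0,1)`. -/
theorem U_uniform
    {Ω : Type*} [MeasurableSpace Ω] (P : Measure Ω) [IsProbabilityMeasure P]
    (Z : Ω → ℝ) (δ : Ω → ℝ) (hZ : Measurable Z) (hδ : Measurable δ)
    (hδ01 : ∀ ω, δ ω = 0 ∨ δ ω = 1)
    (H1 H0 : ℝ → ℝ)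
    (hH1 : ∀ v, H1 v = (P {ω | Z ω ≤ v ∧ δ ω = 1}).toReal)
    (hH0 : ∀ v, H0 v = (P {ω | Z ω ≤ v ∧ δ ω = 0}).toReal)
    (θ : ℝ) (hθ : θ = (P {ω | δ ω = 1}).toReal) (hθ0 : 0 < θ) (hθ1 : θ < 1)
    (hH1cont : Continuous H1) (hH0cont : Continuous H0) :
    ∀ s : ℝ, s ∈ Set.Icc (0:ℝ) 1 →
      (P {ω | δ ω * H1 (Z ω) + (1 - δ ω) * (θ + H0 (Z ω)) ≤ s}).toReal = s := by
  intro s hs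
  obtain ⟨hs0, hs1⟩ := hs
  set D1 : Set Ω := {ω | δ ω = 1} with hD1def
  set D0 : Set Ω := {ω | δ ω = 0} with hD0def
  have hD1 : MeasurableSet D1 := hδ (measurableSet_singleton 1)
  have hD0 : MeasurableSet D0 := hδ (measurableSet_singleton 0)
  have hG1 : ∀ v, H1 v = (P ({ω | Z ω ≤ v} ∩ D1)).toReal := by
    intro v; rw [hH1]; rfl
  have hG0 : ∀ v, H0 v = (P ({ω | Z ω ≤ v} ∩ D0)).toReal := by
    intro v; rw [hH0]; rfl
  have hH0nn : ∀ v, 0 ≤ H0 v := fun v => by rw [hH0]; exact ENNReal.toReal_nonneg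
  -- decompose the event
  have hev : {ω | δ ω * H1 (Z ω) + (1 - δ ω) * (θ + H0 (Z ω)) ≤ s}
      = ({ω | H1 (Z ω) ≤ s} ∩ D1) ∪ ({ω | θ + H0 (Z ω) ≤ s} ∩ D0) := by
    ext ω
    rcases hδ01 ω with h | h <;>
      simp [hD1def, hD0def, Set.mem_setOf_eq, h]
  have hBmeas : MeasurableSet ({ω | θ + H0 (Z ω) ≤ s} ∩ D0) := by
    refine (measurableSet_le (measurable_const.add ((hH0cont.measurable).comp hZ))
      measurable_const).inter hD0
  have hdisj : Disjoint ({ω | H1 (Z ω) ≤ s} ∩ D1) ({ω | θ + H0 (Z ω) ≤ s} ∩ D0) := by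
    rw [Set.disjoint_iff]
    rintro ω ⟨⟨_, h1⟩, ⟨_, h0⟩⟩
    simp only [hD1def, hD0def, Set.mem_setOf_eq] at h1 h0
    exact absurd (h0 ▸ h1) (by norm_num)
  have hPD1 : (P D1).toReal = θ := hθ.symm
  have hcompl : D0 = D1ᶜ := by
    ext ω; rcases hδ01 ω with h | h <;> simp [hD1def, hD0def, h]
  have hPD0 : (P D0).toReal = 1 - θ := by
    rw [hcompl, measure_compl hD1 (measure_ne_top _ _), measure_univ, hθ,
      ENNReal.toReal_sub_of_le prob_le_one ENNReal.one_ne_top, ENNReal.toReal_one]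
  have hA := key_lemma P Z hZ D1 hD1 H1 hG1 hH1cont s hs0
  rw [hPD1] at hA
  rw [hev, measure_union hdisj hBmeas,
    ENNReal.toReal_add (measure_ne_top _ _) (measure_ne_top _ _), hA]
  by_cases hcase : s < θ
  · have hBempty : {ω | θ + H0 (Z ω) ≤ s} ∩ D0 = ∅ := by
      ext ω
      simp only [Set.mem_inter_iff, Set.mem_setOf_eq, Set.mem_empty_iff_false, iff_false, not_and]
      intro hle _
      have := hH0nn (Z ω)
      linarith
    rw [hBempty]
    simp [min_eq_left hcase.le]
  · push_neg at hcase
    have hset : {ω : Ω | θ + H0 (Z ω) ≤ s} = {ω | H0 (Z ω) ≤ s - θ} := by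
      ext ω; simp only [Set.mem_setOf_eq]; constructor <;> intro h <;> linarith
    have hB := key_lemma P Z hZ D0 hD0 H0 hG0 hH0cont (s - θ) (by linarith)
    rw [hPD0] at hB
    rw [hset, hB, min_eq_right hcase, min_eq_left (by linarith : s - θ ≤ 1 - θ)]
    ring
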